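/- arXiv:2412.20945 — 2 statements merged into one kernel-verified Lean document; each statement's English description precedes it below -/
import Mathlib

section
/- Let V be an n × n integer matrix, b an n × 1 integer column vector, and let W be the (n+2) × (n+2) column-type elementary enlargement of V, i.e. the block matrix W = [[V, b, 0], [0, 0, 1], [0, 0, 0]]. Then det(W − t·Wᵀ) = t·det(V − t·Vᵀ) as polynomials in t. In particular, for either type of elementary enlargement W of V one has det(W − t·Wᵀ) = ±t·det(V − t·Vᵀ). -/
open Matrix

/-- The matrix `V - t·Vᵀ` with entries in `ℤ[t]`, associated to a square integer matrix. -/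
noncomputable def alexMat {n : Type*} [Fintype n] (V : Matrix n n ℤ) :
    Matrix n n (Polynomial ℤ) :=
  V.map Polynomial.C - (Polynomial.X : Polynomial ℤ) • (Vᵀ.map Polynomial.C)

/-- The row-type elementary enlargement `W = [[V, 0, 0], [a, 0, 0], [0, 1, 0]]`. -/
def rowEnlarge {n : ℕ} (V : Matrix (Fin n) (Fin n) ℤ) (a : Fin n → ℤ) :
    Matrix (Fin n ⊕ Fin 2) (Fin n ⊕ Fin 2) ℤ :=
  Matrix.fromBlocks V 0
    (Matrix.of fun (i : Fin 2) (j : Fin n) => if i = 0 then a j else 0)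
    !![0, 0; 1, 0]

/-- The column-type elementary enlargement `W = [[V, b, 0], [0, 0, 1], [0, 0, 0]]` of an
`n × n` integer matrix `V` by a column vector `b`. -/
def colEnlarge {n : ℕ} (V : Matrix (Fin n) (Fin n) ℤ) (b : Fin n → ℤ) :
    Matrix (Fin n ⊕ Fin 2) (Fin n ⊕ Fin 2) ℤ :=
  Matrix.fromBlocks V
    (Matrix.of fun (i : Fin n) (j : Fin 2) => if j = 0 then b i else 0)
    0
    !![0, 1; 0, 0]

/-!
In `W - t Wᵀ` the two new columns are `(b, 0, -t)` and `(0, 1, 0)`, and the first new row is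
`(-t bᵀ, 0, 1)`; subtracting `t b_j` times the last column from column `j` clears that row,
leaving a block-triangular matrix with diagonal blocks `V - t Vᵀ` and `[[0, 1], [-t, 0]]`,
of determinant `t`. The row-type enlargement of `V` is the transpose of the column-type
enlargement of `Vᵀ`, and `alexMat` commutes with transposition.
-/

open Polynomial

lemma det_fromBlocks_of_mul_eq {R m n : Type*} [CommRing R] [Fintype m] [DecidableEq m]
    [Fintype n] [DecidableEq n] (A : Matrix m m R) (B : Matrix m n R) (C : Matrix n m R)
    (D : Matrix n n R) (F : Matrix n m R) (hBF : B * F = 0) (hDF : D * F = -C) :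
    (fromBlocks A B C D).det = A.det * D.det := by
  have hreduce : fromBlocks A B C D * fromBlocks 1 0 F 1 = fromBlocks A B 0 D := by
    simp [fromBlocks_multiply, hBF, hDF]
  have hunipotent : (fromBlocks (1 : Matrix m m R) 0 F 1).det = 1 := by simp
  rw [← mul_one (fromBlocks A B C D).det, ← hunipotent, ← det_mul, hreduce,
    det_fromBlocks_zero₂₁]

lemma alexMat_transpose {n : Type*} [Fintype n] (V : Matrix n n ℤ) :
    alexMat Vᵀ = (alexMat V)ᵀ := by
  simp [alexMat, transpose_sub, transpose_smul, transpose_map]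

lemma alexMat_colEnlarge {n : ℕ} (V : Matrix (Fin n) (Fin n) ℤ) (b : Fin n → ℤ) :
    alexMat (colEnlarge V b) =
      fromBlocks (alexMat V)
        (of fun i (j : Fin 2) => if j = 0 then C (b i) else 0)
        (of fun (i : Fin 2) j => if i = 0 then -(X * C (b j)) else 0)
        !![0, 1; -X, 0] := by
  ext (i | i) (j | j)
  · simp [alexMat, colEnlarge]
  · fin_cases j <;> simp [alexMat, colEnlarge]
  · fin_cases i <;> simp [alexMat, colEnlarge]
  · fin_cases i <;> fin_cases j <;> simp [alexMat, colEnlarge]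

theorem det_alexMat_colEnlarge_eq_X_mul {n : ℕ} (V : Matrix (Fin n) (Fin n) ℤ)
    (b : Fin n → ℤ) :
    (alexMat (colEnlarge V b)).det = X * (alexMat V).det := by
  rw [alexMat_colEnlarge, mul_comm, det_fromBlocks_of_mul_eq _ _ _ _
    (of fun (i : Fin 2) j => if i = 1 then X * C (b j) else 0)]
  · simp [det_fin_two_of]
  · ext i j
    simp [mul_apply]
  · ext i j
    fin_cases i <;> simp [mul_apply]

lemma rowEnlarge_eq_transpose_colEnlarge {n : ℕ} (V : Matrix (Fin n) (Fin n) ℤ)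
    (a : Fin n → ℤ) : rowEnlarge V a = (colEnlarge Vᵀ a)ᵀ := by
  ext (i | i) (j | j)
  · simp [rowEnlarge, colEnlarge]
  · fin_cases j <;> simp [rowEnlarge, colEnlarge]
  · fin_cases i <;> simp [rowEnlarge, colEnlarge]
  · fin_cases i <;> fin_cases j <;> simp [rowEnlarge, colEnlarge]

theorem det_alexMat_rowEnlarge_eq_X_mul {n : ℕ} (V : Matrix (Fin n) (Fin n) ℤ)
    (a : Fin n → ℤ) :
    (alexMat (rowEnlarge V a)).det = X * (alexMat V).det := by
  rw [rowEnlarge_eq_transpose_colEnlarge, alexMat_transpose, det_transpose,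
    det_alexMat_colEnlarge_eq_X_mul, alexMat_transpose, det_transpose]

/-- For the column-type elementary enlargement `W` of `V`,
`det(W − t·Wᵀ) = t·det(V − t·Vᵀ)`; in particular, for either type of elementary
enlargement of `V` the determinant is `±t·det(V − t·Vᵀ)`. -/
theorem det_alexMat_colEnlarge {n : ℕ} (V : Matrix (Fin n) (Fin n) ℤ)
    (a b : Fin n → ℤ) :
    (alexMat (colEnlarge V b)).det = Polynomial.X * (alexMat V).det ∧
    ((alexMat (colEnlarge V b)).det = Polynomial.X * (alexMat V).det ∨
      (alexMat (colEnlarge V b)).det = -(Polynomial.X * (alexMat V).det)) ∧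
    ((alexMat (rowEnlarge V a)).det = Polynomial.X * (alexMat V).det ∨
      (alexMat (rowEnlarge V a)).det = -(Polynomial.X * (alexMat V).det)) :=
  ⟨det_alexMat_colEnlarge_eq_X_mul V b, Or.inl (det_alexMat_colEnlarge_eq_X_mul V b),
    Or.inl (det_alexMat_rowEnlarge_eq_X_mul V a)⟩
end

section
/- Let V be an n × n integer matrix, a a 1 × n integer row vector, and W = [[V, 0, 0], [a, 0, 0], [0, 1, 0]] the row-type elementary enlargement of V. Then the signature of the real symmetric matrix W + Wᵀ equals the signature of V + Vᵀ, i.e. σ(W + Wᵀ) = σ(V + Vᵀ). -/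
open Matrix

/-- The signature of a real symmetric (= Hermitian) matrix: the number of positive
eigenvalues minus the number of negative eigenvalues, counted with multiplicity.
(Defined to be `0` on non-symmetric matrices.) -/
noncomputable def signature {n : Type*} [Fintype n] [DecidableEq n]
    (A : Matrix n n ℝ) : ℤ :=
  if hA : A.IsHermitian then
    ((Finset.univ.filter fun i => 0 < hA.eigenvalues i).card : ℤ) -
    ((Finset.univ.filter fun i => hA.eigenvalues i < 0).card : ℤ)
  else 0

/-!
`W + Wᵀ` is congruent, via the unipotent shear `E = [[1, C], [0, 1]]` whose block `C` carries `a`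
in its second column, to the block diagonal matrix `diag(V + Vᵀ, [[0, 1], [1, 0]])`. Sylvester's
law of inertia (Mathlib's `QuadraticForm.sigPos`, `sigNeg`) makes the signature a congruence
invariant; hence it is additive on block diagonal matrices, and the hyperbolic plane
`[[0, 1], [1, 0]]` has signature `0`.
-/

open QuadraticMap QuadraticForm Finset

section Congruence

variable {m : Type*} [Fintype m] [DecidableEq m]

lemma Matrix.toQuadraticForm'_apply (A : Matrix m m ℝ) (x : m → ℝ) :
    A.toQuadraticForm' x = x ⬝ᵥ A *ᵥ x := by
  simp [toQuadraticForm', toLinearMap₂'_apply']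

lemma Matrix.toQuadraticForm'_mul_mul_transpose (A M : Matrix m m ℝ) :
    (M * A * Mᵀ).toQuadraticForm' = A.toQuadraticForm'.comp (mulVecLin Mᵀ) := by
  ext x
  rw [QuadraticMap.comp_apply, toQuadraticForm'_apply, toQuadraticForm'_apply, mulVecLin_apply,
    ← mulVec_mulVec, ← mulVec_mulVec, dotProduct_mulVec, ← mulVec_transpose]

lemma Matrix.toQuadraticForm'_diagonal (w : m → ℝ) :
    (diagonal w).toQuadraticForm' = weightedSumSquares ℝ w := by
  ext x
  simp only [toQuadraticForm'_apply, mulVec_diagonal, dotProduct, weightedSumSquares_apply,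
    smul_eq_mul]
  exact Finset.sum_congr rfl fun i _ => by ring

lemma Matrix.equivalent_toQuadraticForm'_mul_mul_transpose {A M : Matrix m m ℝ}
    (hM : IsUnit M.det) : (M * A * Mᵀ).toQuadraticForm'.Equivalent A.toQuadraticForm' := by
  rw [toQuadraticForm'_mul_mul_transpose]
  have hMT : IsUnit Mᵀ.det := by rwa [det_transpose]
  exact ⟨(isometryEquivOfCompLinearEquiv _ (Mᵀ.toLinearEquiv (Pi.basisFun ℝ m) hMT)).symm⟩

lemma Matrix.IsHermitian.eq_mul_diagonal_eigenvalues_mul_transpose {A : Matrix m m ℝ}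
    (hA : A.IsHermitian) :
    A = (hA.eigenvectorUnitary : Matrix m m ℝ) * diagonal hA.eigenvalues
      * (hA.eigenvectorUnitary : Matrix m m ℝ)ᵀ := by
  conv_lhs => rw [hA.spectral_theorem]
  rw [RCLike.ofReal_real_eq_id, Function.id_comp, Unitary.conjStarAlgAut_apply,
    star_eq_conjTranspose, conjTranspose_eq_transpose_of_trivial]

lemma sigPos_sub_sigNeg_toQuadraticForm'_diagonal (w : m → ℝ) :
    (sigPos (diagonal w).toQuadraticForm' : ℤ) - sigNeg (diagonal w).toQuadraticForm'
      = #{i | 0 < w i} - #{i | w i < 0} := by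
  rw [toQuadraticForm'_diagonal, sigPos_weightedSumSquares, sigNeg_weightedSumSquares,
    ← coe_filter_univ, ← coe_filter_univ, Set.ncard_coe_finset, Set.ncard_coe_finset]

lemma signature_eq_sigPos_sub_sigNeg {A : Matrix m m ℝ} (hA : A.IsHermitian) :
    signature A = sigPos A.toQuadraticForm' - sigNeg A.toQuadraticForm' := by
  have hQ := equivalent_toQuadraticForm'_mul_mul_transpose (A := diagonal hA.eigenvalues)
    (UnitaryGroup.det_isUnit hA.eigenvectorUnitary)
  rw [← hA.eq_mul_diagonal_eigenvalues_mul_transpose] at hQ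
  rw [signature, dif_pos hA, hQ.sigPos_eq, hQ.sigNeg_eq,
    sigPos_sub_sigNeg_toQuadraticForm'_diagonal]

lemma signature_diagonal (w : m → ℝ) :
    signature (diagonal w) = #{i | 0 < w i} - #{i | w i < 0} := by
  rw [signature_eq_sigPos_sub_sigNeg (isHermitian_diagonal w),
    sigPos_sub_sigNeg_toQuadraticForm'_diagonal]

lemma signature_mul_mul_transpose {A M : Matrix m m ℝ} (hA : A.IsHermitian)
    (hM : IsUnit M.det) : signature (M * A * Mᵀ) = signature A := by
  have hMAM : (M * A * Mᵀ).IsHermitian := by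
    simpa using isHermitian_mul_mul_conjTranspose M hA
  have hQ := equivalent_toQuadraticForm'_mul_mul_transpose (A := A) hM
  rw [signature_eq_sigPos_sub_sigNeg hMAM, signature_eq_sigPos_sub_sigNeg hA, hQ.sigPos_eq,
    hQ.sigNeg_eq]

end Congruence

section BlockDiagonal

variable {m o : Type*} [Fintype m] [DecidableEq m] [Fintype o] [DecidableEq o]

omit [DecidableEq m] [DecidableEq o] in
lemma card_filter_sum (p : m ⊕ o → Prop) [DecidablePred p] :
    #{i | p i} = #{i | p (.inl i)} + #{i | p (.inr i)} := by
  simp only [card_filter, Fintype.sum_sum_type]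

lemma signature_fromBlocks_zero {A : Matrix m m ℝ} {D : Matrix o o ℝ} (hA : A.IsHermitian)
    (hD : D.IsHermitian) : signature (fromBlocks A 0 0 D) = signature A + signature D := by
  set U : Matrix (m ⊕ o) (m ⊕ o) ℝ :=
    fromBlocks (hA.eigenvectorUnitary : Matrix m m ℝ) 0 0 hD.eigenvectorUnitary
  have hU : IsUnit U.det := by
    rw [det_fromBlocks_zero₂₁]
    exact (UnitaryGroup.det_isUnit _).mul (UnitaryGroup.det_isUnit _)
  have hdiag :
      fromBlocks A 0 0 D = U * diagonal (Sum.elim hA.eigenvalues hD.eigenvalues) * Uᵀ := by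
    conv_lhs => rw [hA.eq_mul_diagonal_eigenvalues_mul_transpose,
      hD.eq_mul_diagonal_eigenvalues_mul_transpose]
    simp [U, ← fromBlocks_diagonal, fromBlocks_transpose, fromBlocks_multiply]
  rw [hdiag, signature_mul_mul_transpose (isHermitian_diagonal _) hU, signature_diagonal,
    signature, dif_pos hA, signature, dif_pos hD]
  simp only [card_filter_sum, Sum.elim_inl, Sum.elim_inr]
  grind

end BlockDiagonal

lemma signature_hyperbolicPlane : signature !![(0 : ℝ), 1; 1, 0] = 0 := by
  have h : !![(0 : ℝ), 1; 1, 0] = !![1, 1; 1, -1] * diagonal ![2⁻¹, -2⁻¹] * !![1, 1; 1, -1]ᵀ := by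
    ext i j
    fin_cases i <;> fin_cases j <;> simp [mul_apply, Fin.sum_univ_two, diagonal, vecHead, vecTail]
      <;> norm_num
  have hdet : IsUnit (!![(1 : ℝ), 1; 1, -1]).det := by norm_num [det_fin_two_of]
  rw [h, signature_mul_mul_transpose (isHermitian_diagonal _) hdet, signature_diagonal]
  simp only [card_filter, Fin.sum_univ_two]
  norm_num

section RowEnlarge

variable {n : ℕ} (V : Matrix (Fin n) (Fin n) ℤ) (a : Fin n → ℤ)

def rowEnlargeShear : Matrix (Fin n ⊕ Fin 2) (Fin n ⊕ Fin 2) ℤ :=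
  fromBlocks 1 (of fun j (i : Fin 2) => if i = 1 then a j else 0) 0 1

lemma det_rowEnlargeShear : (rowEnlargeShear a).det = 1 := by
  simp [rowEnlargeShear]

lemma rowEnlarge_add_transpose :
    rowEnlarge V a + (rowEnlarge V a)ᵀ =
      rowEnlargeShear a * fromBlocks (V + Vᵀ) 0 0 !![0, 1; 1, 0] * (rowEnlargeShear a)ᵀ := by
  simp only [rowEnlarge, rowEnlargeShear, fromBlocks_transpose, fromBlocks_add,
    fromBlocks_multiply, fromBlocks_inj]
  refine ⟨?_, ?_, ?_, ?_⟩
  · ext j k; simp [mul_apply]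
  · ext j i; fin_cases i <;> simp [mul_apply]
  · ext i j; fin_cases i <;> simp [vecMul, dotProduct]
  · ext i j; fin_cases i <;> fin_cases j <;> simp

lemma map_rowEnlarge_add_transpose :
    (rowEnlarge V a + (rowEnlarge V a)ᵀ).map (Int.cast : ℤ → ℝ) =
      (rowEnlargeShear a).map Int.cast *
        fromBlocks ((V + Vᵀ).map Int.cast) 0 0 !![0, 1; 1, 0] *
      ((rowEnlargeShear a).map Int.cast)ᵀ := by
  have hH : (!![0, 1; 1, 0] : Matrix (Fin 2) (Fin 2) ℤ).map (Int.castRingHom ℝ)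
      = !![0, 1; 1, 0] := by
    ext i j; fin_cases i <;> fin_cases j <;> simp
  change Matrix.map _ (Int.castRingHom ℝ) = _
  rw [rowEnlarge_add_transpose, Matrix.map_mul, Matrix.map_mul, transpose_map, fromBlocks_map, hH]
  simp

end RowEnlarge

/-- For the row-type elementary enlargement `W` of `V`, the signatures of the (real)
symmetrizations agree: `σ(W + Wᵀ) = σ(V + Vᵀ)`. -/
theorem signature_rowEnlarge {n : ℕ} (V : Matrix (Fin n) (Fin n) ℤ) (a : Fin n → ℤ) :
    signature ((rowEnlarge V a + (rowEnlarge V a)ᵀ).map (Int.cast : ℤ → ℝ))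
      = signature ((V + Vᵀ).map (Int.cast : ℤ → ℝ)) := by
  have hB : ((V + Vᵀ).map (Int.cast : ℤ → ℝ)).IsHermitian :=
    isHermitian_iff_isSymm.2 ((isSymm_add_transpose_self V).map _)
  have hH : (!![(0 : ℝ), 1; 1, 0]).IsHermitian := by
    ext i j; fin_cases i <;> fin_cases j <;> rfl
  have hE : IsUnit ((rowEnlargeShear a).map (Int.cast : ℤ → ℝ)).det := by
    rw [← Int.cast_det, det_rowEnlargeShear, Int.cast_one]
    exact isUnit_one
  rw [map_rowEnlarge_add_transpose, signature_mul_mul_transpose (hB.fromBlocks (by simp) hH) hE,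
    signature_fromBlocks_zero hB hH, signature_hyperbolicPlane, add_zero]
end
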